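/- (List size lemma) Let 𝒞 = {x̄₁,…,x̄_M} ⊆ 𝒳ⁿ be a codebook of constant composition P̂_X with M = e^{nR}, let X be uniform on 𝒞, and let Z ∈ 𝒵ⁿ be such that, conditioned on X = x̄_i and on the event that the joint type of (X,Z) equals a fixed P̂_{XZ}, Z is uniform on the conditional type class 𝒯ₙ(P̂_{Z|X}|x̄_i). Define the list ℒ(z) = 𝒞 ∩ 𝒯ₙ(P̂_{X|Z}|z). Then for any τ ≥ 0, Pr(|ℒ(Z)| ≥ e^{nτ} | joint type = P̂_{XZ}) ≥ 1 − (n+1)^{|𝒳||𝒵|−1}·e^{−n[R − I(P̂_{XZ}) − τ]}. -/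

import Mathlib

open Finset
open scoped Classical

/-!
Let `k` be the joint type of some `(x₀, z₀)` with `z₀ ∈ T x₀`, with marginal counts `k_X`, `k_Z`,
and let `N = e^{nτ}`. Every `z ∈ T x` has type `k_Z`, so by double counting at most
`N · |𝒯(k_Z)|` pairs `(x, z)` have `z ∈ T x` and `|ℒ(z)| < N`. Expanding `n^n = (∑_b c_b)^n`
and grouping the terms by type gives `|𝒯(c)| · ∏_b c_b^{c_b} ≤ n^n`; comparing multinomial
coefficients shows that the term of type `c` is the largest, so also
`n^n ≤ (n+1)^{|𝒵|-1} · |𝒯(c)| · ∏_b c_b^{c_b}`. Applied on each fibre `{i | x i = a}`, the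
latter bounds `|T x|` from below, and `e^{nI} = n^n ∏ k^k / (∏ k_X^{k_X} ∏ k_Z^{k_Z})` turns the
two bounds into the claim.
-/

open Nat in
theorem Nat.factorial_mul_pow_le_factorial_mul_pow (k l : ℕ) : k ! * k ^ l ≤ l ! * k ^ k := by
  rcases le_total l k with hlk | hkl
  · have hk : l ! * k.descFactorial (k - l) = k ! := by
      simpa [Nat.sub_sub_self hlk] using Nat.factorial_mul_descFactorial (Nat.sub_le k l)
    calc k ! * k ^ l = l ! * k.descFactorial (k - l) * k ^ l := by rw [hk]
      _ ≤ l ! * k ^ (k - l) * k ^ l := by gcongr; exact Nat.descFactorial_le_pow _ _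
      _ = l ! * k ^ k := by rw [mul_assoc, ← pow_add, Nat.sub_add_cancel hlk]
  · obtain ⟨d, rfl⟩ := Nat.exists_eq_add_of_le hkl
    calc k ! * k ^ (k + d) = k ! * k ^ d * k ^ k := by ring
      _ ≤ k ! * (k + 1) ^ d * k ^ k := by gcongr; exact Nat.le_succ k
      _ ≤ (k + d)! * k ^ k := by gcongr; exact Nat.factorial_mul_pow_le_factorial

noncomputable section TypeClass

open scoped Nat

variable {ι β : Type*} [Fintype ι]

def typeCount (f : ι → β) (b : β) : ℕ := #{i | f i = b}

variable (ι) in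
def typeClass [Fintype β] (c : β → ℕ) : Finset (ι → β) := {f | typeCount f = c}

theorem mem_typeClass [Fintype β] {c : β → ℕ} {f : ι → β} :
    f ∈ typeClass ι c ↔ typeCount f = c := by
  simp [typeClass]

theorem typeCount_eq_card_subtype (f : ι → β) (b : β) :
    typeCount f b = Fintype.card {i // f i = b} :=
  (Fintype.card_subtype _).symm

theorem typeCount_apply_pos (f : ι → β) (i : ι) : 0 < typeCount f (f i) :=
  card_pos.2 ⟨i, by simp⟩

theorem sum_typeCount [Fintype β] (f : ι → β) : ∑ b, typeCount f b = Fintype.card ι :=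
  (card_eq_sum_card_fiberwise fun i _ => mem_univ (f i)).symm

@[to_additive]
theorem prod_comp_eq_prod_pow_typeCount [Fintype β] {M : Type*} [CommMonoid M] (q : β → M)
    (f : ι → β) : ∏ i, q (f i) = ∏ b, q b ^ typeCount f b := by
  simp_rw [typeCount, ← prod_const]
  exact (prod_fiberwise' univ f q).symm

theorem typeCount_comp_perm (f : ι → β) (σ : Equiv.Perm ι) : typeCount (f ∘ σ) = typeCount f := by
  funext b
  simp only [typeCount_eq_card_subtype]
  exact Fintype.card_congr (σ.subtypeEquiv fun _ => Iff.rfl)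

theorem exists_perm_comp_eq {f g : ι → β} (h : typeCount f = typeCount g) :
    ∃ σ : Equiv.Perm ι, g ∘ σ = f :=
  ⟨Equiv.ofFiberEquiv fun b => Fintype.equivOfCardEq <| by
      rw [← typeCount_eq_card_subtype, ← typeCount_eq_card_subtype, h],
    funext (Equiv.ofFiberEquiv_map _)⟩

/-- The multinomial coefficient counts a type class: `Perm ι` acts transitively on it by
precomposition, with stabilisers `∏ b, Perm {i // f i = b}`. -/
theorem card_typeClass_mul_prod_factorial [Fintype β] (f : ι → β) :
    #(typeClass ι (typeCount f)) * ∏ b, (typeCount f b)! = (Fintype.card ι)! := by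
  have hmaps : ∀ σ ∈ (univ : Finset (Equiv.Perm ι)), f ∘ σ ∈ typeClass ι (typeCount f) :=
    fun σ _ => mem_typeClass.2 (typeCount_comp_perm f σ)
  have hfiber : ∀ g ∈ typeClass ι (typeCount f),
      #{σ : Equiv.Perm ι | f ∘ σ = g} = ∏ b, (typeCount f b)! := by
    intro g hg
    obtain ⟨τ, rfl⟩ := exists_perm_comp_eq (mem_typeClass.1 hg)
    simp only [typeCount_eq_card_subtype]
    rw [← DomMulAct.stabilizer_card f, ← Fintype.card_subtype]
    refine Fintype.card_congr
      ((Equiv.mulRight τ).subtypeEquiv fun ρ => ⟨fun h => ?_, fun h => ?_⟩).symm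
    · rw [Equiv.coe_mulRight, Equiv.Perm.coe_mul, ← Function.comp_assoc, h]
    · funext i
      simpa using congrFun h (τ.symm i)
  rw [← Fintype.card_perm, ← Finset.card_univ, card_eq_sum_card_fiberwise hmaps,
    sum_congr rfl hfiber, sum_const, smul_eq_mul]

theorem card_typeClass_mul_prod_pow_le [Fintype β] (f g : ι → β) :
    #(typeClass ι (typeCount g)) * ∏ b, typeCount f b ^ typeCount g b ≤
      #(typeClass ι (typeCount f)) * ∏ b, typeCount f b ^ typeCount f b := by
  set c := typeCount f
  set l := typeCount g
  have hfac : (∏ b, (c b)!) * ∏ b, c b ^ l b ≤ (∏ b, (l b)!) * ∏ b, c b ^ c b := by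
    simp only [← prod_mul_distrib]
    exact prod_le_prod' fun b _ => Nat.factorial_mul_pow_le_factorial_mul_pow _ _
  refine Nat.le_of_mul_le_mul_left ?_ (prod_pos (s := univ) fun b _ => Nat.factorial_pos (c b))
  calc (∏ b, (c b)!) * (#(typeClass ι l) * ∏ b, c b ^ l b)
      = #(typeClass ι l) * ((∏ b, (c b)!) * ∏ b, c b ^ l b) := by ring
    _ ≤ #(typeClass ι l) * ((∏ b, (l b)!) * ∏ b, c b ^ c b) := by gcongr
    _ = (∏ b, (c b)!) * (#(typeClass ι c) * ∏ b, c b ^ c b) := by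
      rw [← mul_assoc, card_typeClass_mul_prod_factorial, ← card_typeClass_mul_prod_factorial f]
      ring

theorem sum_pow_card_eq_sum_typeClass [Fintype β] {R : Type*} [CommSemiring R] (c : β → R) :
    (∑ b, c b) ^ Fintype.card ι =
      ∑ l ∈ univ.image (typeCount (ι := ι) (β := β)), #(typeClass ι l) • ∏ b, c b ^ l b := by
  rw [← Finset.card_univ, ← prod_const, Fintype.prod_sum]
  simp_rw [prod_comp_eq_prod_pow_typeCount c]
  exact sum_comp (fun l : β → ℕ => ∏ b, c b ^ l b) typeCount

theorem card_typeClass_le_div [Fintype β] (f : ι → β) :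
    (#(typeClass ι (typeCount f)) : ℝ) ≤
      (Fintype.card ι : ℝ) ^ Fintype.card ι / ∏ b, (typeCount f b : ℝ) ^ typeCount f b := by
  rw [le_div_iff₀ (by exact_mod_cast prod_pos fun b _ => Nat.pow_self_pos)]
  have h := sum_pow_card_eq_sum_typeClass (ι := ι) (typeCount f)
  rw [sum_typeCount] at h
  have hle : #(typeClass ι (typeCount f)) * ∏ b, typeCount f b ^ typeCount f b ≤
      Fintype.card ι ^ Fintype.card ι := by
    rw [h, ← smul_eq_mul]
    exact single_le_sum (f := fun l => #(typeClass ι l) • ∏ b, typeCount f b ^ l b)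
      (fun _ _ => Nat.zero_le _) (mem_image_of_mem _ (mem_univ f))
  exact_mod_cast hle

/-- A type is determined by its values off a fixed letter `b₀`, each at most `card ι`. -/
theorem card_image_typeCount_le [Fintype β] [Nonempty β] :
    #(univ.image (typeCount : (ι → β) → β → ℕ)) ≤
      (Fintype.card ι + 1) ^ (Fintype.card β - 1) := by
  obtain ⟨b₀⟩ := ‹Nonempty β›
  calc #(univ.image (typeCount : (ι → β) → β → ℕ))
      ≤ #(univ : Finset ({b // b ≠ b₀} → Fin (Fintype.card ι + 1))) :=
        card_le_card_of_injOn (fun l b => Fin.ofNat (Fintype.card ι + 1) (l b))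
          (fun _ _ => mem_univ _) ?_
    _ = (Fintype.card ι + 1) ^ (Fintype.card β - 1) := by
      simp [Fintype.card_subtype_compl]
  simp only [coe_image, coe_univ, Set.image_univ]
  rintro _ ⟨f, rfl⟩ _ ⟨g, rfl⟩ hfg
  have hle : ∀ (h : ι → β) b, typeCount h b < Fintype.card ι + 1 := fun h b =>
    Nat.lt_succ_of_le (card_filter_le _ _)
  have hne : ∀ b ≠ b₀, typeCount f b = typeCount g b := fun b hb => by
    simpa [Nat.mod_eq_of_lt (hle _ _)] using congrArg Fin.val (congrFun hfg ⟨b, hb⟩)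
  funext b
  by_cases hb : b = b₀
  · subst hb
    have hf := (add_sum_erase univ (fun c => typeCount f c) (mem_univ b)).trans (sum_typeCount f)
    have hg := (add_sum_erase univ (fun c => typeCount g c) (mem_univ b)).trans (sum_typeCount g)
    have hrest : ∑ c ∈ univ.erase b, typeCount f c = ∑ c ∈ univ.erase b, typeCount g c :=
      sum_congr rfl fun c hc => hne c (ne_of_mem_erase hc)
    omega
  · exact hne b hb

theorem pow_card_le_card_typeClass_mul [Fintype β] [Nonempty β] (f : ι → β) :
    Fintype.card ι ^ Fintype.card ι ≤ (Fintype.card ι + 1) ^ (Fintype.card β - 1) *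
      #(typeClass ι (typeCount f)) * ∏ b, typeCount f b ^ typeCount f b := by
  have h := sum_pow_card_eq_sum_typeClass (ι := ι) (typeCount f)
  rw [sum_typeCount] at h
  rw [h, mul_assoc]
  calc ∑ l ∈ univ.image typeCount, #(typeClass ι l) • ∏ b, typeCount f b ^ l b
      ≤ ∑ _l ∈ univ.image (typeCount : (ι → β) → β → ℕ),
          #(typeClass ι (typeCount f)) * ∏ b, typeCount f b ^ typeCount f b := by
        refine sum_le_sum ?_
        simp only [mem_image, mem_univ, true_and, forall_exists_index, forall_apply_eq_imp_iff]
        exact fun g => card_typeClass_mul_prod_pow_le f g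
    _ ≤ _ := by
        rw [sum_const, smul_eq_mul]
        gcongr
        exact card_image_typeCount_le

end TypeClass

noncomputable section Conditional

variable {ι α β : Type*} [Fintype ι]

theorem typeCount_restrict_fiber (x : ι → α) (z : ι → β) (a : α) (b : β) :
    typeCount (fun i : {i // x i = a} => z i) b = typeCount (fun i => (x i, z i)) (a, b) := by
  simp only [typeCount_eq_card_subtype]
  convert Fintype.card_congr
    ((Equiv.subtypeSubtypeEquivSubtypeInter (fun i => x i = a) (fun i => z i = b)).trans
      (Equiv.subtypeEquivRight fun i => (Prod.ext_iff (x := (x i, z i)) (y := (a, b))).symm))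

theorem card_filter_and_eq_typeCount (x : ι → α) (z : ι → β) (a : α) (b : β) :
    #{i | x i = a ∧ z i = b} = typeCount (fun i => (x i, z i)) (a, b) := by
  simp only [typeCount, Prod.mk.injEq]

theorem typeCount_fst_eq_sum [Fintype β] (x : ι → α) (z : ι → β) (a : α) :
    typeCount x a = ∑ b, typeCount (fun i => (x i, z i)) (a, b) := by
  rw [typeCount_eq_card_subtype, ← sum_typeCount (fun i : {i // x i = a} => z i)]
  exact sum_congr rfl fun b _ => typeCount_restrict_fiber x z a b

theorem typeCount_snd_eq_sum [Fintype α] (x : ι → α) (z : ι → β) (b : β) :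
    typeCount z b = ∑ a, typeCount (fun i => (x i, z i)) (a, b) := by
  rw [typeCount_fst_eq_sum z x b]
  refine sum_congr rfl fun a _ => ?_
  simp only [← card_filter_and_eq_typeCount, and_comm]

theorem typeCount_eq_of_typeCount_prod_eq [Fintype α] [Fintype β] {x x' : ι → α}
    {z z' : ι → β} (h : typeCount (fun i => (x i, z i)) = typeCount (fun i => (x' i, z' i))) :
    typeCount x = typeCount x' ∧ typeCount z = typeCount z' :=
  ⟨funext fun a => by rw [typeCount_fst_eq_sum x z, typeCount_fst_eq_sum x' z', h],
    funext fun b => by rw [typeCount_snd_eq_sum x z, typeCount_snd_eq_sum x' z', h]⟩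

variable [Fintype α] [Fintype β]

def condTypeClass (x : ι → α) (k : α × β → ℕ) : Finset (ι → β) :=
  {z | typeCount (fun i => (x i, z i)) = k}

theorem mem_condTypeClass {x : ι → α} {k : α × β → ℕ} {z : ι → β} :
    z ∈ condTypeClass x k ↔ typeCount (fun i => (x i, z i)) = k := by
  simp [condTypeClass]

theorem card_condTypeClass (x : ι → α) (k : α × β → ℕ) :
    #(condTypeClass x k) = ∏ a, #(typeClass {i // x i = a} fun b => k (a, b)) := by
  rw [← Fintype.card_piFinset]
  refine card_equiv ((Equiv.arrowCongr (Equiv.sigmaFiberEquiv x).symm (Equiv.refl β)).trans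
    (Equiv.piCurry fun _ _ => β)) fun z => ?_
  simp only [mem_condTypeClass, Fintype.mem_piFinset, mem_typeClass, funext_iff, Prod.forall]
  refine forall₂_congr fun a b => ?_
  rw [← typeCount_restrict_fiber]
  rfl

theorem prod_pow_le_card_condTypeClass_mul [Nonempty β] (x : ι → α) (z : ι → β) :
    ∏ a, typeCount x a ^ typeCount x a ≤
      (Fintype.card ι + 1) ^ (Fintype.card α * (Fintype.card β - 1)) *
        #(condTypeClass x (typeCount fun i => (x i, z i))) *
          ∏ p, typeCount (fun i => (x i, z i)) p ^ typeCount (fun i => (x i, z i)) p := by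
  set k := typeCount fun i => (x i, z i)
  calc ∏ a, typeCount x a ^ typeCount x a
      ≤ ∏ a, ((Fintype.card ι + 1) ^ (Fintype.card β - 1) *
          #(typeClass {i // x i = a} fun b => k (a, b)) * ∏ b, k (a, b) ^ k (a, b)) := by
        refine prod_le_prod' fun a _ => ?_
        have h := pow_card_le_card_typeClass_mul (fun i : {i // x i = a} => z i)
        rw [funext (typeCount_restrict_fiber x z a), ← typeCount_eq_card_subtype] at h
        refine h.trans ?_
        gcongr
        exact card_filter_le _ _
    _ = _ := by
        rw [prod_mul_distrib, prod_mul_distrib, prod_const, card_univ, ← pow_mul, mul_comm (_ - 1),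
          card_condTypeClass, Fintype.prod_prod_type]

theorem one_le_mul_card_condTypeClass [Nonempty ι] (x : ι → α) (z : ι → β) :
    1 ≤ (Fintype.card ι + 1 : ℝ) ^ (Fintype.card α * Fintype.card β - 1) *
        (∏ p, (typeCount (fun i => (x i, z i)) p : ℝ) ^ typeCount (fun i => (x i, z i)) p) /
          (∏ a, (typeCount x a : ℝ) ^ typeCount x a) *
        #(condTypeClass x (typeCount fun i => (x i, z i))) := by
  set k := typeCount fun i => (x i, z i)
  have : Nonempty α := ⟨x (Classical.arbitrary ι)⟩
  have : Nonempty β := ⟨z (Classical.arbitrary ι)⟩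
  have hK : Fintype.card α * (Fintype.card β - 1) ≤ Fintype.card α * Fintype.card β - 1 := by
    rw [Nat.mul_sub_one]
    have := Fintype.card_pos (α := α)
    omega
  have hD : (0 : ℝ) < ∏ a, (typeCount x a : ℝ) ^ typeCount x a := by
    exact_mod_cast prod_pos fun a _ => Nat.pow_self_pos
  rw [div_mul_eq_mul_div, one_le_div hD]
  calc ∏ a, (typeCount x a : ℝ) ^ typeCount x a
      ≤ (Fintype.card ι + 1 : ℝ) ^ (Fintype.card α * (Fintype.card β - 1)) *
          #(condTypeClass x k) * ∏ p, (k p : ℝ) ^ k p := by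
        exact_mod_cast prod_pow_le_card_condTypeClass_mul x z
    _ ≤ (Fintype.card ι + 1 : ℝ) ^ (Fintype.card α * Fintype.card β - 1) *
          #(condTypeClass x k) * ∏ p, (k p : ℝ) ^ k p := by
        gcongr
        linarith
    _ = _ := by ring

end Conditional

noncomputable def mutualInfo {α β : Type*} [Fintype α] [Fintype β] (P : α × β → ℝ) : ℝ :=
  ∑ p, P p * Real.log (P p / ((∑ b, P (p.1, b)) * (∑ a, P (a, p.2))))

section EmpiricalMutualInfo

variable {ι α β : Type*} [Fintype ι] [Fintype α] [Fintype β] [Nonempty ι]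

theorem card_mul_mutualInfo_eq_sum_log (x : ι → α) (z : ι → β) :
    (Fintype.card ι : ℝ) *
        mutualInfo (fun p => (typeCount (fun i => (x i, z i)) p : ℝ) / Fintype.card ι) =
      ∑ i, Real.log (typeCount (fun i => (x i, z i)) (x i, z i) * Fintype.card ι /
        (typeCount x (x i) * typeCount z (z i))) := by
  set k := typeCount fun i => (x i, z i)
  have hn : (Fintype.card ι : ℝ) ≠ 0 := by positivity
  have hfst : ∀ a, ∑ b, (k (a, b) : ℝ) / Fintype.card ι = typeCount x a / Fintype.card ι := by
    intro a
    rw [← sum_div, typeCount_fst_eq_sum x z a, Nat.cast_sum]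
  have hsnd : ∀ b, ∑ a, (k (a, b) : ℝ) / Fintype.card ι = typeCount z b / Fintype.card ι := by
    intro b
    rw [← sum_div, typeCount_snd_eq_sum x z b, Nat.cast_sum]
  rw [mutualInfo, mul_sum]
  simp only [hfst, hsnd]
  rw [sum_comp_eq_sum_nsmul_typeCount (fun p : α × β => Real.log (k p * Fintype.card ι /
    (typeCount x p.1 * typeCount z p.2))) (fun i => (x i, z i))]
  refine sum_congr rfl fun p _ => ?_
  rw [nsmul_eq_mul, ← mul_assoc, mul_div_cancel₀ _ hn]
  congr 2
  field_simp

theorem exp_card_mul_mutualInfo (x : ι → α) (z : ι → β) :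
    Real.exp ((Fintype.card ι : ℝ) *
        mutualInfo (fun p => (typeCount (fun i => (x i, z i)) p : ℝ) / Fintype.card ι)) *
      (∏ a, (typeCount x a : ℝ) ^ typeCount x a) * ∏ b, (typeCount z b : ℝ) ^ typeCount z b =
    (Fintype.card ι : ℝ) ^ Fintype.card ι *
      ∏ p, (typeCount (fun i => (x i, z i)) p : ℝ) ^ typeCount (fun i => (x i, z i)) p := by
  have hx (i : ι) : (0 : ℝ) < typeCount x (x i) := Nat.cast_pos.2 (typeCount_apply_pos x i)
  have hz (i : ι) : (0 : ℝ) < typeCount z (z i) := Nat.cast_pos.2 (typeCount_apply_pos z i)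
  have hxz (i : ι) : (0 : ℝ) < typeCount (fun i => (x i, z i)) (x i, z i) :=
    Nat.cast_pos.2 (typeCount_apply_pos (fun i => (x i, z i)) i)
  have hpos (i : ι) : 0 < (typeCount (fun i => (x i, z i)) (x i, z i) : ℝ) * Fintype.card ι /
      (typeCount x (x i) * typeCount z (z i)) := by
    have := hx i; have := hz i; have := hxz i; positivity
  rw [card_mul_mutualInfo_eq_sum_log, ← Real.log_prod fun i _ => (hpos i).ne',
    Real.exp_log (prod_pos fun i _ => hpos i),
    ← prod_comp_eq_prod_pow_typeCount, ← prod_comp_eq_prod_pow_typeCount,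
    ← prod_comp_eq_prod_pow_typeCount, ← Finset.card_univ, ← prod_const, ← prod_mul_distrib,
    ← prod_mul_distrib, ← prod_mul_distrib]
  refine prod_congr rfl fun i _ => ?_
  have := hx i
  have := hz i
  field_simp

end EmpiricalMutualInfo

section Counting

variable {α β : Type*}

theorem sum_card_filter_card_lt_le [DecidableEq β] (C : Finset α) (T : α → Finset β) {S : Finset β}
    (hS : ∀ x ∈ C, T x ⊆ S) {θ : ℝ} (hθ : 0 ≤ θ) :
    ∑ x ∈ C, (#{z ∈ T x | ¬θ ≤ #{x' ∈ C | z ∈ T x'}} : ℝ) ≤ θ * #S := by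
  set small : β → Prop := fun z => ¬θ ≤ #{x' ∈ C | z ∈ T x'}
  have hswap : ∑ x ∈ C, #{z ∈ T x | small z} = ∑ z ∈ S, #{x ∈ C | z ∈ T x ∧ small z} := by
    refine (sum_congr rfl fun x hx => congrArg card ?_).trans
      (sum_card_bipartiteAbove_eq_sum_card_bipartiteBelow (r := fun x z => z ∈ T x ∧ small z))
    ext z
    simp only [bipartiteAbove, mem_filter]
    exact ⟨fun h => ⟨hS x hx h.1, h⟩, fun h => h.2⟩
  have hsmall : ∀ z, (#{x ∈ C | z ∈ T x ∧ small z} : ℝ) ≤ θ := by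
    intro z
    by_cases hz : small z
    · simp only [hz, and_true]
      exact (not_le.1 hz).le
    · simp [hz, hθ]
  calc ∑ x ∈ C, (#{z ∈ T x | small z} : ℝ) = ∑ z ∈ S, (#{x ∈ C | z ∈ T x ∧ small z} : ℝ) := by
        exact_mod_cast hswap
    _ ≤ ∑ _z ∈ S, θ := sum_le_sum fun z _ => hsmall z
    _ = θ * #S := by rw [sum_const, nsmul_eq_mul, mul_comm]

theorem one_sub_le_average_card_filter_div {C : Finset α} (hC : C.Nonempty) (T : α → Finset β)
    (P : β → Prop) [DecidablePred P] {c B : ℝ} (hT : ∀ x ∈ C, 1 ≤ c * #(T x))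
    (hB : ∑ x ∈ C, (#{z ∈ T x | ¬P z} : ℝ) ≤ B) :
    1 - c * B / #C ≤ 1 / #C * ∑ x ∈ C, (#{z ∈ T x | P z} : ℝ) / #(T x) := by
  have hM : (0 : ℝ) < #C := by exact_mod_cast hC.card_pos
  obtain ⟨x₀, hx₀⟩ := hC
  have hc : 0 < c := pos_of_mul_pos_left (b := (#(T x₀) : ℝ)) (by linarith [hT x₀ hx₀])
    (Nat.cast_nonneg _)
  have hterm : ∀ x ∈ C, 1 - c * #{z ∈ T x | ¬P z} ≤ (#{z ∈ T x | P z} : ℝ) / #(T x) := by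
    intro x hx
    have ht : (0 : ℝ) < #(T x) := pos_of_mul_pos_right (by linarith [hT x hx]) hc.le
    have hsplit : (#{z ∈ T x | P z} : ℝ) + #{z ∈ T x | ¬P z} = #(T x) := by
      exact_mod_cast card_filter_add_card_filter_not (s := T x) P
    rw [le_div_iff₀ ht]
    nlinarith [hT x hx, Nat.cast_nonneg (α := ℝ) #{z ∈ T x | ¬P z}]
  calc 1 - c * B / #C ≤ 1 - c * (∑ x ∈ C, (#{z ∈ T x | ¬P z} : ℝ)) / #C := by gcongr
    _ = 1 / #C * ∑ x ∈ C, (1 - c * #{z ∈ T x | ¬P z}) := by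
        rw [sum_sub_distrib, ← mul_sum, sum_const, nsmul_eq_mul]
        field_simp
    _ ≤ 1 / #C * ∑ x ∈ C, (#{z ∈ T x | P z} : ℝ) / #(T x) := by
        gcongr with x hx
        exact hterm x hx

end Counting

theorem list_size_bound {ι α β : Type*} [Fintype ι] [Fintype α] [Fintype β] [Nonempty ι]
    {C : Finset (ι → α)} (hCne : C.Nonempty) (k : α × β → ℕ)
    (hC : ∀ x ∈ C, (condTypeClass x k).Nonempty) {θ : ℝ} (hθ : 0 ≤ θ) :
    1 - (Fintype.card ι + 1 : ℝ) ^ (Fintype.card α * Fintype.card β - 1) * θ *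
        Real.exp (Fintype.card ι * mutualInfo fun p => (k p : ℝ) / Fintype.card ι) / #C ≤
      1 / #C * ∑ x ∈ C, (#{z ∈ condTypeClass x k | θ ≤ #{x' ∈ C | z ∈ condTypeClass x' k}} : ℝ) /
        #(condTypeClass x k) := by
  obtain ⟨x₀, hx₀⟩ := hCne
  obtain ⟨z₀, hz₀⟩ := hC x₀ hx₀
  obtain rfl := mem_condTypeClass.1 hz₀
  have hmarg : ∀ x, ∀ z ∈ condTypeClass x (typeCount fun i => (x₀ i, z₀ i)),
      typeCount x = typeCount x₀ ∧ typeCount z = typeCount z₀ :=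
    fun x z hz => typeCount_eq_of_typeCount_prod_eq (mem_condTypeClass.1 hz)
  have hlower : ∀ x ∈ C, (1 : ℝ) ≤ _ * (#(condTypeClass x _) : ℝ) := fun x hx => by
    obtain ⟨z, hz⟩ := hC x hx
    simpa only [mem_condTypeClass.1 hz, (hmarg x z hz).1] using one_le_mul_card_condTypeClass x z
  have hbad := (sum_card_filter_card_lt_le C _ (fun x _ z hz => mem_typeClass.2 (hmarg x z hz).2)
    hθ).trans (mul_le_mul_of_nonneg_left (card_typeClass_le_div z₀) hθ)
  refine (one_sub_le_average_card_filter_div ⟨x₀, hx₀⟩ _ _ hlower hbad).trans_eq' ?_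
  have hDx : (0 : ℝ) < ∏ a, (typeCount x₀ a : ℝ) ^ typeCount x₀ a := by
    exact_mod_cast prod_pos fun a _ => Nat.pow_self_pos
  have hDz : (0 : ℝ) < ∏ b, (typeCount z₀ b : ℝ) ^ typeCount z₀ b := by
    exact_mod_cast prod_pos fun b _ => Nat.pow_self_pos
  rw [eq_div_of_mul_eq (by positivity) ((mul_assoc _ _ _).symm.trans (exp_card_mul_mutualInfo x₀ z₀))]
  field_simp

theorem list_size_lemma_general
    {𝒳 𝒵 : Type*} [Fintype 𝒳] [Fintype 𝒵]
    (n : ℕ) (hn : 0 < n)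
    (C : Finset (Fin n → 𝒳)) (hCne : C.Nonempty)
    (Phat : 𝒳 × 𝒵 → ℝ)
    (T : (Fin n → 𝒳) → Finset (Fin n → 𝒵))
    (hT : ∀ x z, z ∈ T x ↔ ∀ a b,
      ((univ.filter (fun i => x i = a ∧ z i = b)).card : ℝ) / n = Phat (a, b))
    (hTne : ∀ x ∈ C, (T x).Nonempty)
    (τ : ℝ)
    (R : ℝ) (hR : R = Real.log C.card / n)
    (I : ℝ) (hI : I = ∑ p : 𝒳 × 𝒵, Phat p *
      Real.log (Phat p / ((∑ b, Phat (p.1, b)) * (∑ a, Phat (a, p.2))))) :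
    (1 / (C.card : ℝ)) * ∑ x ∈ C,
        (((T x).filter (fun z =>
            Real.exp (n * τ) ≤ ((C.filter (fun x' => z ∈ T x')).card : ℝ))).card : ℝ)
          / ((T x).card : ℝ) ≥
      1 - ((n + 1 : ℝ)) ^ (Fintype.card 𝒳 * Fintype.card 𝒵 - 1) *
        Real.exp (-(n * (R - I - τ))) := by
  obtain ⟨x₀, hx₀⟩ := hCne
  obtain ⟨z₀, hz₀⟩ := hTne x₀ hx₀
  set k := typeCount fun i => (x₀ i, z₀ i)
  have hn' : (n : ℝ) ≠ 0 := by positivity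
  obtain rfl : Phat = fun p => (k p : ℝ) / n := funext fun p => by
    rw [← (hT x₀ z₀).1 hz₀ p.1 p.2, card_filter_and_eq_typeCount]
  obtain rfl : T = fun x => condTypeClass x k := funext fun x => by
    ext z
    simp only [hT, card_filter_and_eq_typeCount, div_left_inj' hn', Nat.cast_inj,
      mem_condTypeClass, funext_iff, Prod.forall]
  have : Nonempty (Fin n) := ⟨⟨0, hn⟩⟩
  have hbound := list_size_bound ⟨x₀, hx₀⟩ k hTne (Real.exp_pos (n * τ)).le
  rw [Fintype.card_fin] at hbound
  refine ge_iff_le.2 (hbound.trans_eq' ?_)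
  have hexp : Real.exp (-(n * (R - I - τ))) = Real.exp (n * I) * Real.exp (n * τ) / #C := by
    rw [← Real.exp_add, ← Real.exp_log (Nat.cast_pos.2 (card_pos.2 ⟨x₀, hx₀⟩)), ← Real.exp_sub, hR]
    congr 1
    field_simp
    ring
  rw [hexp, show I = mutualInfo fun p => (k p : ℝ) / n from hI]
  ring

/-- list size lemma. `C` is a constant-composition codebook of
block length `n`; for each codeword `x`, `T x` is the conditional type class of
sequences `z` whose joint type with `x` is the fixed joint type `Phat`.
Conditioned on the joint type of `(X,Z)` being `Phat`, `X` is uniform on `C` and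
`Z` is uniform on `T X`.  The list is `ℒ(z) = {x' ∈ C : z ∈ T x'}`.  Then for
`τ ≥ 0`, the conditional probability that `|ℒ(Z)| ≥ e^{nτ}` is at least
`1 − (n+1)^{|𝒳||𝒵|−1}·e^{−n[R − I(Phat) − τ]}`, where `R = (1/n)·log|C|` and
`I(Phat)` is the mutual information of the joint type. -/
theorem list_size_lemma
    {𝒳 𝒵 : Type*} [Fintype 𝒳] [Fintype 𝒵]
    (n : ℕ) (hn : 0 < n)
    (C : Finset (Fin n → 𝒳)) (hCne : C.Nonempty)
    (Phat : 𝒳 × 𝒵 → ℝ)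
    (T : (Fin n → 𝒳) → Finset (Fin n → 𝒵))
    (hT : ∀ x z, z ∈ T x ↔ ∀ a b,
      ((univ.filter (fun i => x i = a ∧ z i = b)).card : ℝ) / n = Phat (a, b))
    (hTne : ∀ x ∈ C, (T x).Nonempty)
    (hcc : ∀ x ∈ C, ∀ x' ∈ C, (T x).card = (T x').card)
    (τ : ℝ) (hτ : 0 ≤ τ)
    (R : ℝ) (hR : R = Real.log C.card / n)
    (I : ℝ) (hI : I = ∑ p : 𝒳 × 𝒵, Phat p *
      Real.log (Phat p / ((∑ b, Phat (p.1, b)) * (∑ a, Phat (a, p.2))))) :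
    (1 / (C.card : ℝ)) * ∑ x ∈ C,
        (((T x).filter (fun z =>
            Real.exp (n * τ) ≤ ((C.filter (fun x' => z ∈ T x')).card : ℝ))).card : ℝ)
          / ((T x).card : ℝ) ≥
      1 - ((n + 1 : ℝ)) ^ (Fintype.card 𝒳 * Fintype.card 𝒵 - 1) *
        Real.exp (-(n * (R - I - τ))) :=
  list_size_lemma_general n hn C hCne Phat T hT hTne τ R hR I hI
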